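/- arXiv:2602.19847 — 4 statements merged into one kernel-verified Lean document; each statement's English description precedes it below -/
import Mathlib

section
/- If the minimum min(a_1, …, a_{n-1}) is attained at exactly one index, then there exists a function w : ℝ → ℝ that is infinitely differentiable on the closed half-line [0, ∞) (in the sense of ContDiffOn of order ⊤ on [0, ∞)) such that for every s ≥ 0 one has w(s) ≥ w₀ and P(w(s)) = s. -/
open Set Finset Filter Topology

/-- If the minimum of the `a k` is attained at exactly one
index, then there is a function `w : ℝ → ℝ`, infinitely differentiable on the
closed half-line `[0, ∞)` (as `ContDiffOn` of order `⊤`), such that for every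
`s ≥ 0` one has `w s ≥ w₀` and `P (w s) = s`. -/
theorem statement5 (n : ℕ) (hn : 3 ≤ n) (a : Fin (n - 1) → ℝ)
    (P : ℝ → ℝ) (hP : ∀ x : ℝ, P x = ∏ k, (x + a k))
    (w₀ : ℝ) (hw₀ : w₀ = -sInf (Set.range a))
    (huniq : ∃! j : Fin (n - 1), w₀ = -a j) :
    ∃ w : ℝ → ℝ, ContDiffOn ℝ (⊤ : ℕ∞) w (Set.Ici 0) ∧
      ∀ s : ℝ, 0 ≤ s → w₀ ≤ w s ∧ P (w s) = s := by
  classical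
  obtain ⟨j₀, hj₀, huniq'⟩ := huniq
  have hge : ∀ j, 0 ≤ w₀ + a j := by
    intro j
    have h1 : sInf (Set.range a) ≤ a j := csInf_le (Set.finite_range a).bddBelow ⟨j, rfl⟩
    rw [hw₀]; linarith
  have hj₀0 : w₀ + a j₀ = 0 := by rw [hj₀]; ring
  have hlt : ∀ j, j ≠ j₀ → 0 < w₀ + a j := by
    intro j hj
    rcases (hge j).lt_or_eq with h | h
    · exact h
    · exact absurd (huniq' j (by linarith)) hj
  have hPfun : P = fun x => ∏ k, (x + a k) := funext hP
  have hPc : ContDiff ℝ (⊤ : ℕ∞) P := by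
    rw [hPfun]
    exact contDiff_prod fun i _ => contDiff_id.add contDiff_const
  set D : ℝ → ℝ := fun x => ∑ k, ∏ j ∈ Finset.univ.erase k, (x + a j) with hDdef
  have hPd : ∀ x : ℝ, HasDerivAt P (D x) x := by
    intro x
    have h := HasDerivAt.fun_finsetProd (u := Finset.univ) (f := fun k y => y + a k)
      (f' := fun _ => (1:ℝ)) (x := x) (fun i _ => (hasDerivAt_id x).add_const (a i))
    simp only [smul_eq_mul, mul_one] at h
    rw [hPfun]
    exact h
  have hDpos : ∀ x : ℝ, w₀ ≤ x → 0 < D x := by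
    intro x hx
    have hfac : ∀ j, 0 ≤ x + a j := fun j => by have := hge j; linarith
    have hterm : 0 < ∏ j ∈ Finset.univ.erase j₀, (x + a j) := by
      apply Finset.prod_pos
      intro j hj
      have := hlt j (Finset.ne_of_mem_erase hj)
      linarith
    exact Finset.sum_pos' (fun k _ => Finset.prod_nonneg fun j _ => hfac j)
      ⟨j₀, Finset.mem_univ j₀, hterm⟩
  have hderiv : ∀ x : ℝ, deriv P x = D x := fun x => (hPd x).deriv
  have hmono : StrictMonoOn P (Set.Ici w₀) := by
    apply strictMonoOn_of_deriv_pos (convex_Ici w₀) hPc.continuous.continuousOn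
    intro x hx
    rw [interior_Ici] at hx
    rw [hderiv]
    exact hDpos x (le_of_lt hx)
  have hP0 : P w₀ = 0 := by
    rw [hP]
    exact Finset.prod_eq_zero (Finset.mem_univ j₀) (by linarith)
  have hcard : (Finset.univ : Finset (Fin (n-1))).card ≠ 0 := by
    simp [Finset.card_univ]
    omega
  have hgrow : ∀ x : ℝ, w₀ + 1 ≤ x → x - w₀ ≤ P x := by
    intro x hx
    rw [hP]
    have h1 : ∀ j : Fin (n-1), x - w₀ ≤ x + a j := by
      intro j; have := hge j; linarith
    have h2 : (x - w₀) ^ (Finset.univ : Finset (Fin (n-1))).card ≤ ∏ k, (x + a k) := by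
      rw [← Finset.prod_const]
      exact Finset.prod_le_prod (fun j _ => by linarith) (fun j _ => h1 j)
    calc x - w₀ ≤ (x - w₀) ^ (Finset.univ : Finset (Fin (n-1))).card :=
          le_self_pow₀ (by linarith) hcard
      _ ≤ _ := h2
  have hsurj : ∀ s : ℝ, 0 ≤ s → ∃ x, w₀ ≤ x ∧ P x = s := by
    intro s hs
    set b := max (w₀ + 1) (s + w₀) with hb
    have hwb : w₀ ≤ b := le_trans (by linarith) (le_max_left _ _)
    have hPb : s ≤ P b := by
      have h1 : b - w₀ ≤ P b := hgrow b (le_max_left _ _)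
      have h2 : s + w₀ ≤ b := le_max_right _ _
      linarith
    have hiv := intermediate_value_Icc hwb hPc.continuous.continuousOn
    obtain ⟨x, hx, hxP⟩ := hiv ⟨by rw [hP0]; exact hs, hPb⟩
    exact ⟨x, hx.1, hxP⟩
  have hsurj' : ∀ s : ℝ, ∃ x, (0 ≤ s → w₀ ≤ x ∧ P x = s) := by
    intro s
    by_cases hs : 0 ≤ s
    · obtain ⟨x, h1, h2⟩ := hsurj s hs; exact ⟨x, fun _ => ⟨h1, h2⟩⟩
    · exact ⟨w₀, fun h => absurd h hs⟩
  choose w hw using hsurj'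
  -- the negative strip just below w₀
  obtain ⟨ε, hε0, hstrip⟩ : ∃ ε > 0, ∀ x : ℝ, w₀ - ε < x → x < w₀ → P x < 0 := by
    obtain ⟨ε, hε0, hεle⟩ : ∃ ε > 0, ∀ j, j ≠ j₀ → ε ≤ w₀ + a j := by
      refine ⟨(insert (1:ℝ) ((Finset.univ.erase j₀).image fun j => w₀ + a j)).min'
        (Finset.insert_nonempty _ _), ?_, ?_⟩
      · have hmem := Finset.min'_mem
          (insert (1:ℝ) ((Finset.univ.erase j₀).image fun j => w₀ + a j))
          (Finset.insert_nonempty _ _)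
        rcases Finset.mem_insert.mp hmem with h | h
        · rw [h]; norm_num
        · obtain ⟨j, hj, hje⟩ := Finset.mem_image.mp h
          rw [← hje]
          exact hlt j (Finset.ne_of_mem_erase hj)
      · intro j hj
        apply Finset.min'_le
        exact Finset.mem_insert.mpr
          (Or.inr (Finset.mem_image.mpr ⟨j, Finset.mem_erase.2 ⟨hj, Finset.mem_univ j⟩, rfl⟩))
    refine ⟨ε, hε0, ?_⟩
    intro x h1 h2
    rw [hP]
    have hxj₀ : x + a j₀ < 0 := by linarith
    have hpos : ∀ j ∈ Finset.univ.erase j₀, 0 < x + a j := by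
      intro j hj
      have := hεle j (Finset.ne_of_mem_erase hj)
      linarith
    rw [← Finset.prod_erase_mul _ _ (Finset.mem_univ j₀)]
    exact mul_neg_of_pos_of_neg (Finset.prod_pos hpos) hxj₀
  refine ⟨w, ?_, hw⟩
  intro s hs
  obtain ⟨hwx, hPx⟩ := hw s hs
  set x := w s with hx
  have hD0 : D x ≠ 0 := (hDpos x hwx).ne'
  have hPcx : ContDiffAt ℝ (⊤ : ℕ∞) P x := hPc.contDiffAt
  have hfd : HasFDerivAt P
      ((ContinuousLinearEquiv.unitsEquivAut ℝ (Units.mk0 (D x) hD0)) : ℝ →L[ℝ] ℝ) x :=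
    (hPd x).hasFDerivAt_equiv hD0
  have h1top : ((⊤ : ℕ∞) : WithTop ℕ∞) ≠ 0 := by simp
  have hsf : HasStrictFDerivAt P
      ((ContinuousLinearEquiv.unitsEquivAut ℝ (Units.mk0 (D x) hD0)) : ℝ →L[ℝ] ℝ) x :=
    hPcx.hasStrictFDerivAt' hfd h1top
  set g : ℝ → ℝ := hPcx.localInverse hfd h1top with hgdef
  have hgc : ContDiffAt ℝ (⊤ : ℕ∞) g s := by
    rw [← hPx]
    exact hPcx.to_localInverse hfd h1top
  have hgright : ∀ᶠ y in 𝓝 s, P (g y) = y := by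
    have := hsf.eventually_right_inverse
    rwa [hPx] at this
  have hgx : g s = x := by
    have := hsf.localInverse_apply_image
    rwa [hPx] at this
  have hgcont : Tendsto g (𝓝 s) (𝓝 x) := by
    have := hsf.localInverse_continuousAt
    rw [hPx] at this
    rw [← hgx]
    exact this
  have hnear : ∀ᶠ y in 𝓝 s, x - ε < g y :=
    hgcont (Ioi_mem_nhds (by linarith : x - ε < x))
  have hev : w =ᶠ[𝓝[Set.Ici 0] s] g := by
    filter_upwards [hgright.filter_mono nhdsWithin_le_nhds,
      hnear.filter_mono nhdsWithin_le_nhds, self_mem_nhdsWithin] with y hy1 hy2 hy3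
    have hy3' : (0:ℝ) ≤ y := hy3
    have hgy : w₀ ≤ g y := by
      by_contra hc
      push_neg at hc
      have hneg := hstrip (g y) (by linarith) hc
      rw [hy1] at hneg
      linarith
    obtain ⟨hwy, hPwy⟩ := hw y hy3'
    exact hmono.injOn hwy hgy (by rw [hPwy, hy1])
  exact (hgc.contDiffWithinAt).congr_of_eventuallyEq hev (by rw [hgx])
end

section
/- Let (x, y) ∈ ℝ² with y ≠ 0, and assume P′(x² + α + b) > 0 for every α > 0. Then there is at most one triple (u, v, w) ∈ ℝ³ with u ≠ 0 satisfying the four constraints: w = x² + u² + b; v² + y² = P(w); vu + xy = 0; and vx − uy > 0. -/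
/-!
Eliminating `v² = (xy)²/u²` and `w = x² + u² + b`, every solution gives `s = u² > 0` with
`P (x² + s + b) - (xy)²/s = y²`. The left side is strictly increasing in `s > 0`, so `u²` is
determined. The remaining constraints are invariant under `(u, v) ↦ (-u, -v)`, which flips the
sign of `v x - u y`, so the sign condition picks out `(u, v)`.
-/

open Set

theorem strictMonoOn_of_forall_deriv_pos {D : Set ℝ} (hD : Convex ℝ D) (hDo : IsOpen D)
    {f : ℝ → ℝ} (hf : ∀ t ∈ D, 0 < deriv f t) : StrictMonoOn f D := by
  refine strictMonoOn_of_deriv_pos hD (fun t ht => ?_) (by rwa [hDo.interior_eq])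
  exact (differentiableAt_of_deriv_ne_zero (hf t ht).ne').continuousAt.continuousWithinAt

theorem StrictMonoOn.sub_const_div {g : ℝ → ℝ} (hg : StrictMonoOn g (Ioi 0)) {c : ℝ}
    (hc : 0 ≤ c) : StrictMonoOn (fun s => g s - c / s) (Ioi 0) := by
  intro s hs t ht hst
  have hdiv : c / t ≤ c / s := div_le_div_of_nonneg_left hc hs hst.le
  have := hg hs ht hst
  dsimp only
  linarith

theorem sq_eq_div_sq_of_mul_add_eq_zero {u v p : ℝ} (hu : u ≠ 0) (h : v * u + p = 0) :
    v ^ 2 = p ^ 2 / u ^ 2 := by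
  rw [eq_div_iff (pow_ne_zero 2 hu)]
  linear_combination (v * u - p) * h

theorem eq_and_eq_of_sq_eq {x y u₁ v₁ u₂ v₂ : ℝ} (hu₂ : u₂ ≠ 0) (hsq : u₁ ^ 2 = u₂ ^ 2)
    (h₁ : v₁ * u₁ + x * y = 0) (h₂ : v₂ * u₂ + x * y = 0)
    (hpos₁ : 0 < v₁ * x - u₁ * y) (hpos₂ : 0 < v₂ * x - u₂ * y) : u₁ = u₂ ∧ v₁ = v₂ := by
  rcases sq_eq_sq_iff_eq_or_eq_neg.mp hsq with rfl | rfl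
  · exact ⟨rfl, mul_right_cancel₀ hu₂ (by linarith)⟩
  · have hv : v₂ = -v₁ := mul_right_cancel₀ hu₂ (by linarith)
    subst hv
    linarith

theorem statement8_general (b : ℝ) (P : ℝ → ℝ) (x y : ℝ)
    (hP' : ∀ α : ℝ, 0 < α → 0 < deriv P (x ^ 2 + α + b)) :
    ∀ u₁ v₁ w₁ u₂ v₂ w₂ : ℝ,
      u₁ ≠ 0 → w₁ = x ^ 2 + u₁ ^ 2 + b → v₁ ^ 2 + y ^ 2 = P w₁ →
        v₁ * u₁ + x * y = 0 → 0 < v₁ * x - u₁ * y →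
      u₂ ≠ 0 → w₂ = x ^ 2 + u₂ ^ 2 + b → v₂ ^ 2 + y ^ 2 = P w₂ →
        v₂ * u₂ + x * y = 0 → 0 < v₂ * x - u₂ * y →
      u₁ = u₂ ∧ v₁ = v₂ ∧ w₁ = w₂ := by
  intro u₁ v₁ w₁ u₂ v₂ w₂ hu₁ hw₁ hv₁ hvu₁ hpos₁ hu₂ hw₂ hv₂ hvu₂ hpos₂
  have hP : StrictMonoOn P (Ioi (x ^ 2 + b)) :=
    strictMonoOn_of_forall_deriv_pos (convex_Ioi _) isOpen_Ioi fun t ht => by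
      convert hP' (t - (x ^ 2 + b)) (sub_pos.2 ht) using 2; ring
  have hF : StrictMonoOn (fun s => P (x ^ 2 + s + b) - (x * y) ^ 2 / s) (Ioi 0) :=
    StrictMonoOn.sub_const_div (hP.comp (fun s _ t _ hst => by linarith)
      fun s hs => by rw [mem_Ioi] at hs ⊢; linarith) (sq_nonneg _)
  have hF₁ : P (x ^ 2 + u₁ ^ 2 + b) - (x * y) ^ 2 / u₁ ^ 2 = y ^ 2 := by
    rw [← hw₁, ← hv₁, sq_eq_div_sq_of_mul_add_eq_zero hu₁ hvu₁]; ring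
  have hF₂ : P (x ^ 2 + u₂ ^ 2 + b) - (x * y) ^ 2 / u₂ ^ 2 = y ^ 2 := by
    rw [← hw₂, ← hv₂, sq_eq_div_sq_of_mul_add_eq_zero hu₂ hvu₂]; ring
  have hsq : u₁ ^ 2 = u₂ ^ 2 :=
    hF.injOn (mem_Ioi.2 (by positivity)) (mem_Ioi.2 (by positivity)) (hF₁.trans hF₂.symm)
  obtain ⟨rfl, rfl⟩ := eq_and_eq_of_sq_eq hu₂ hsq hvu₁ hvu₂ hpos₁ hpos₂
  exact ⟨rfl, rfl, hw₁.trans hw₂.symm⟩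

/-- (Uniqueness of the reduced triple under the
Harvey–Lawson-type gauge fixing.) With `P w = w * ∏ j, (w + a j)`, if `y ≠ 0`
and `P′(x² + α + b) > 0` for all `α > 0`, then at most one triple `(u, v, w)`
with `u ≠ 0` satisfies `w = x² + u² + b`, `v² + y² = P w`, `v u + x y = 0` and
`v x - u y > 0`. -/
theorem statement8 (n : ℕ) (hn : 3 ≤ n) (a : Fin (n - 2) → ℝ) (b : ℝ)
    (P : ℝ → ℝ) (hP : ∀ x : ℝ, P x = x * ∏ j, (x + a j))
    (x y : ℝ) (hy : y ≠ 0)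
    (hP' : ∀ α : ℝ, 0 < α → 0 < deriv P (x ^ 2 + α + b)) :
    ∀ u₁ v₁ w₁ u₂ v₂ w₂ : ℝ,
      u₁ ≠ 0 → w₁ = x ^ 2 + u₁ ^ 2 + b → v₁ ^ 2 + y ^ 2 = P w₁ →
        v₁ * u₁ + x * y = 0 → 0 < v₁ * x - u₁ * y →
      u₂ ≠ 0 → w₂ = x ^ 2 + u₂ ^ 2 + b → v₂ ^ 2 + y ^ 2 = P w₂ →
        v₂ * u₂ + x * y = 0 → 0 < v₂ * x - u₂ * y →
      u₁ = u₂ ∧ v₁ = v₂ ∧ w₁ = w₂ :=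
  statement8_general b P x y hP'
end

section
/- Let (x, y) ∈ ℝ² with x ≠ 0 and y ≠ 0. Then there exists at least one α > 0 such that F(α) = 0, where F(α) := y²(1 + x²/α) − P(x² + α + b). -/
/-!
Writing `y² (1 + x²/α) = y² + y²x²/α`, the left side blows up as `α → 0⁺` while
`P (x² + α + b)` stays bounded there, and the left side stays bounded as `α → ∞` while
`P (x² + α + b) → ∞`. The intermediate value theorem on `(0, ∞)` gives the root.
-/

open Filter Topology Set

theorem tendsto_mul_prod_add_atTop {ι : Type*} (s : Finset ι) (a : ι → ℝ) :
    Tendsto (fun w : ℝ => w * ∏ j ∈ s, (w + a j)) atTop atTop := by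
  induction s using Finset.cons_induction with
  | empty => simp only [Finset.prod_empty, mul_one]; exact tendsto_id
  | cons i s hi ih =>
    refine ((tendsto_atTop_add_const_right _ (a i) tendsto_id).atTop_mul_atTop₀ ih).congr
      fun w => ?_
    rw [Finset.prod_cons, id]
    ring

theorem exists_pos_add_div_eq_of_tendsto_atTop {P : ℝ → ℝ} (hPc : Continuous P)
    (hP : Tendsto P atTop atTop) (p c : ℝ) {q : ℝ} (hq : 0 < q) :
    ∃ α > 0, p + q / α = P (α + c) := by
  set f : ℝ → ℝ := fun α => p + q / α - P (α + c)
  have hshift : Continuous fun α : ℝ => P (α + c) := by fun_prop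
  have hf : ContinuousOn f (Ioi 0) :=
    (continuousOn_const.add (continuousOn_const.div continuousOn_id fun _ h => h.ne')).sub
      hshift.continuousOn
  have hf_zero : Tendsto f (𝓝[>] 0) atTop := by
    have hdiv : Tendsto (fun α : ℝ => q / α) (𝓝[>] 0) atTop := by
      simpa only [div_eq_mul_inv] using tendsto_inv_nhdsGT_zero.const_mul_atTop hq
    exact (tendsto_atTop_add_const_left _ p hdiv).atTop_add
      ((hshift.tendsto 0).neg.mono_left nhdsWithin_le_nhds)
  have hf_top : Tendsto f atTop atBot := by
    have hdiv : Tendsto (fun α : ℝ => p + q / α) atTop (𝓝 (p + 0)) :=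
      (tendsto_const_nhds.div_atTop tendsto_id).const_add p
    exact hdiv.add_atBot (tendsto_neg_atTop_atBot.comp
      (hP.comp (tendsto_atTop_add_const_right _ c tendsto_id)))
  obtain ⟨α, hα, hfα⟩ := isPreconnected_Ioi.intermediate_value_Iii
    (le_principal_iff.2 (Ioi_mem_atTop 0)) (le_principal_iff.2 self_mem_nhdsWithin)
    hf hf_top hf_zero (mem_univ 0)
  exact ⟨α, hα, sub_eq_zero.1 hfα⟩

theorem statement9_general (n : ℕ) (a : Fin (n - 2) → ℝ) (b : ℝ)
    (P : ℝ → ℝ) (hP : ∀ x : ℝ, P x = x * ∏ j, (x + a j))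
    (x y : ℝ) (hx : x ≠ 0) (hy : y ≠ 0) :
    ∃ α : ℝ, 0 < α ∧ y ^ 2 * (1 + x ^ 2 / α) - P (x ^ 2 + α + b) = 0 := by
  have hP' : P = fun w => w * ∏ j, (w + a j) := funext hP
  obtain ⟨α, hα, hroot⟩ := exists_pos_add_div_eq_of_tendsto_atTop (hP' ▸ by fun_prop)
    (hP' ▸ tendsto_mul_prod_add_atTop Finset.univ a) (y ^ 2) (x ^ 2 + b)
    (by positivity : 0 < y ^ 2 * x ^ 2)
  refine ⟨α, hα, sub_eq_zero.2 ?_⟩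
  rw [add_comm (x ^ 2) α, add_assoc, ← hroot]
  ring

/-- (Existence of `α`.) With `P w = w * ∏ j, (w + a j)`, if
`x ≠ 0` and `y ≠ 0`, then there exists `α > 0` with
`y² (1 + x²/α) - P (x² + α + b) = 0`. -/
theorem statement9 (n : ℕ) (hn : 3 ≤ n) (a : Fin (n - 2) → ℝ) (b : ℝ)
    (P : ℝ → ℝ) (hP : ∀ x : ℝ, P x = x * ∏ j, (x + a j))
    (x y : ℝ) (hx : x ≠ 0) (hy : y ≠ 0) :
    ∃ α : ℝ, 0 < α ∧ y ^ 2 * (1 + x ^ 2 / α) - P (x ^ 2 + α + b) = 0 :=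
  statement9_general n a b P hP x y hx hy
end

section
/- Let v₁, …, v_{n-1} ∈ ℂⁿ be linearly independent over ℝ and pairwise isotropic, i.e. ω(vᵢ, vⱼ) = 0 for all i, j, and let X ∈ ℂⁿ be the unique vector with Re⟨X, w⟩ = Re(Ω(v₁, …, v_{n-1}, w)) for all w ∈ ℂⁿ. Then the real span Q of {v₁, …, v_{n-1}, X} is an n-dimensional real subspace of ℂⁿ, ω(p, q) = 0 for all p, q ∈ Q, and Im(Ω(w₁, …, wₙ)) = 0 whenever w₁, …, wₙ ∈ Q. Moreover, Q is the unique n-dimensional real subspace of ℂⁿ containing v₁, …, v_{n-1} with these two vanishing properties. -/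
/-!
Since `w ↦ Ω (v, w)` is `ℂ`-linear, its real part determines it, so `⟪X, w⟫ = Ω (v, w)`.
A repeated column gives `⟪X, vᵢ⟫ = 0` and `⟪X, X⟫` is real, so `span_ℝ {v, X}` is isotropic.
Isotropy makes `v` linearly independent over `ℂ`; completing it to a basis shows
`Ω (v, ·) ≠ 0`, hence `X ≠ 0` and, being orthogonal to `v`, `X ∉ span_ℝ v`. A real alternating
`n`-form on an `n`-dimensional space is a multiple of the determinant, so `Im Ω` vanishes on
the span as soon as `Im Ω (v, X) = Im ⟪X, X⟫ = 0`.
For uniqueness, an isotropic `Q` of half dimension is Lagrangian: `I • Q` is its real orthogonal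
complement, so `Q = {x | ∀ q ∈ Q, Im ⟪q, x⟫ = 0}`, and `X` lies there because
`Im ⟪X, q⟫ = Im Ω (v, q) = 0`.
-/

open Module Submodule Set
open scoped InnerProductSpace

variable {E : Type*} [NormedAddCommGroup E] [InnerProductSpace ℂ E]

def IsIsotropic (W : Submodule ℝ E) : Prop :=
  ∀ p ∈ W, ∀ q ∈ W, (⟪p, q⟫_ℂ).im = 0

theorem im_inner_real_smul_left (r : ℝ) (x y : E) :
    (⟪r • x, y⟫_ℂ).im = r * (⟪x, y⟫_ℂ).im := by
  rw [← Complex.coe_smul, inner_smul_left, Complex.conj_ofReal, Complex.im_ofReal_mul]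

theorem im_inner_real_smul_right (r : ℝ) (x y : E) :
    (⟪x, r • y⟫_ℂ).im = r * (⟪x, y⟫_ℂ).im := by
  rw [← Complex.coe_smul, inner_smul_right, Complex.im_ofReal_mul]

theorem isIsotropic_span {s : Set E} (hs : ∀ x ∈ s, ∀ y ∈ s, (⟪x, y⟫_ℂ).im = 0) :
    IsIsotropic (span ℝ s) := by
  intro p hp q hq
  induction hp, hq using Submodule.span_induction₂ with
  | mem_mem x y hx hy => exact hs x hx y hy
  | zero_left | zero_right => simp
  | add_left x y z _ _ _ hx hy => rw [inner_add_left, Complex.add_im, hx, hy, add_zero]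
  | add_right x y z _ _ _ hy hz => rw [inner_add_right, Complex.add_im, hy, hz, add_zero]
  | smul_left r x y _ _ h => rw [im_inner_real_smul_left, h, mul_zero]
  | smul_right r x y _ _ h => rw [im_inner_real_smul_right, h, mul_zero]

theorem IsIsotropic.eq_zero_of_I_smul_mem {W : Submodule ℝ E} (hW : IsIsotropic W) {x : E}
    (hx : x ∈ W) (hIx : Complex.I • x ∈ W) : x = 0 := by
  have h := hW x hx _ hIx
  simpa [inner_smul_right, Complex.mul_im, inner_self_im, ← Complex.ofReal_pow] using h

theorem IsIsotropic.linearIndependent_complex {ι : Type*} {v : ι → E}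
    (hv : LinearIndependent ℝ v) (hW : IsIsotropic (span ℝ (range v))) :
    LinearIndependent ℂ v := by
  classical
  rw [linearIndependent_iff'] at hv ⊢
  intro s c hc i hi
  have hmem : ∀ a : ι → ℝ, ∑ j ∈ s, a j • v j ∈ span ℝ (range v) := fun a =>
    sum_mem fun j _ => smul_mem _ _ (subset_span (mem_range_self j))
  set A := ∑ j ∈ s, (c j).re • v j
  set B := ∑ j ∈ s, (c j).im • v j
  have hAB : A + Complex.I • B = 0 := by
    rw [← hc, Finset.smul_sum, ← Finset.sum_add_distrib]
    refine Finset.sum_congr rfl fun j _ => ?_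
    rw [← Complex.coe_smul, ← Complex.coe_smul, smul_smul, ← add_smul, mul_comm,
      Complex.re_add_im]
  have hB0 : B = 0 := hW.eq_zero_of_I_smul_mem (hmem _) <| by
    rw [eq_neg_of_add_eq_zero_right hAB]; exact neg_mem (hmem _)
  have hA0 : A = 0 := by rwa [hB0, smul_zero, add_zero] at hAB
  apply Complex.ext
  · exact hv s _ hA0 i hi
  · exact hv s _ hB0 i hi

theorem IsIsotropic.mem_of_forall_im_inner_eq_zero [FiniteDimensional ℂ E] {Q : Submodule ℝ E}
    (hQ : IsIsotropic Q) (hdim : finrank ℝ E = 2 * finrank ℝ Q) {x : E}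
    (hx : ∀ q ∈ Q, (⟪q, x⟫_ℂ).im = 0) : x ∈ Q := by
  let _ : InnerProductSpace ℝ E := InnerProductSpace.complexToReal
  let J : E ≃ₗ[ℝ] E :=
    (LinearEquiv.smulOfNeZero ℂ E Complex.I Complex.I_ne_zero).restrictScalars ℝ
  have hJ : ∀ q y, ⟪(J : E →ₗ[ℝ] E) q, y⟫_ℝ = (⟪q, y⟫_ℂ).im := fun q y => by
    simp [J, real_inner_eq_re_inner ℂ, inner_smul_left]
  have hle : Q.map J.toLinearMap ≤ Qᗮ := by
    rintro _ ⟨q, hq, rfl⟩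
    exact (mem_orthogonal' _ _).mpr fun p hp => by rw [hJ]; exact hQ q hq p hp
  have hJQ : Q.map J.toLinearMap = Qᗮ := by
    refine eq_of_le_of_finrank_le hle ?_
    have := finrank_add_finrank_orthogonal Q
    rw [LinearEquiv.finrank_map_eq]
    omega
  rw [← orthogonal_orthogonal Q, ← hJQ, mem_orthogonal]
  rintro _ ⟨q, hq, rfl⟩
  exact (hJ q x).trans (hx q hq)

def AlternatingMap.restrictScalars (R : Type*) {A M N ι : Type*} [CommSemiring R] [Semiring A]
    [Algebra R A] [AddCommMonoid M] [Module A M] [Module R M] [IsScalarTower R A M]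
    [AddCommMonoid N] [Module A N] [Module R N] [IsScalarTower R A N]
    (f : M [⋀^ι]→ₗ[A] N) : M [⋀^ι]→ₗ[R] N :=
  { f.toMultilinearMap.restrictScalars R with map_eq_zero_of_eq' := f.map_eq_zero_of_eq }

theorem AlternatingMap.map_eq_zero_of_forall_mem_span {R M ι : Type*} [CommRing R]
    [AddCommGroup M] [Module R M] [Fintype ι] [DecidableEq ι]
    (f : M [⋀^ι]→ₗ[R] R) {b : ι → M} (hb : LinearIndependent R b) (hfb : f b = 0)
    {u : ι → M} (hu : ∀ i, u i ∈ span R (range b)) : f u = 0 := by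
  let g := f.compLinearMap (span R (range b)).subtype
  have hg : g (Basis.span hb) = 0 := by
    rw [← hfb]
    exact congrArg f (funext fun i => Basis.coe_span_apply hb i)
  change g (fun i => ⟨u i, hu i⟩) = 0
  rw [g.eq_smul_basis_det (Basis.span hb), hg, zero_smul, AlternatingMap.zero_apply]

theorem im_map_eq_zero_of_forall_mem_span {ι : Type*} [Fintype ι] [DecidableEq ι]
    (Ω : E [⋀^ι]→ₗ[ℂ] ℂ) {b : ι → E} (hb : LinearIndependent ℝ b) (hΩb : (Ω b).im = 0)
    {u : ι → E} (hu : ∀ i, u i ∈ span ℝ (range b)) : (Ω u).im = 0 :=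
  (Complex.imLm.compAlternatingMap (Ω.restrictScalars ℝ)).map_eq_zero_of_forall_mem_span
    hb hΩb hu

section CrossProduct

variable {m : ℕ} {Ω : E [⋀^Fin (m + 1)]→ₗ[ℂ] ℂ} {v : Fin m → E} {X : E}

theorem inner_eq_map_snoc_of_re_eq (hX : ∀ w, (⟪X, w⟫_ℂ).re = (Ω (Fin.snoc v w)).re)
    (w : E) :
    ⟪X, w⟫_ℂ = Ω (Fin.snoc v w) := by
  refine Complex.ext (hX w) ?_
  have h := hX (Complex.I • w)
  rw [inner_smul_right, ← Ω.coe_multilinearMap, Ω.toMultilinearMap.snoc_smul] at h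
  simpa [Complex.mul_re] using h

theorem inner_cross_eq_zero (hX : ∀ w, ⟪X, w⟫_ℂ = Ω (Fin.snoc v w)) (i : Fin m) :
    ⟪X, v i⟫_ℂ = 0 := by
  rw [hX]
  exact Ω.map_eq_zero_of_eq _ (i := i.castSucc) (j := Fin.last m) (by simp)
    (Fin.castSucc_lt_last i).ne

theorem isIsotropic_span_snoc_cross (hiso : ∀ i j, (⟪v i, v j⟫_ℂ).im = 0)
    (hX : ∀ w, ⟪X, w⟫_ℂ = Ω (Fin.snoc v w)) :
    IsIsotropic (span ℝ (range (Fin.snoc v X))) := by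
  rw [Fin.range_snoc]
  refine isIsotropic_span ?_
  simp only [forall_mem_insert, forall_mem_range]
  refine ⟨⟨inner_self_im (𝕜 := ℂ) X, fun j => by simp [inner_cross_eq_zero hX j]⟩,
    fun i => ⟨?_, hiso i⟩⟩
  rw [← inner_conj_symm, inner_cross_eq_zero hX i, map_zero, Complex.zero_im]

theorem exists_map_snoc_ne_zero [FiniteDimensional ℂ E] (hE : finrank ℂ E = m + 1)
    (hΩ : Ω ≠ 0) (hv : LinearIndependent ℂ v) : ∃ w, Ω (Fin.snoc v w) ≠ 0 := by
  obtain ⟨w, -, hw⟩ : ∃ w ∈ (⊤ : Submodule ℂ E), w ∉ span ℂ (range v) := by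
    refine SetLike.exists_of_lt (lt_top_iff_ne_top.mpr fun h => ?_)
    have := finrank_span_eq_card hv
    rw [h, finrank_top, hE, Fintype.card_fin] at this
    omega
  have hvw := linearIndependent_finSnoc.mpr ⟨hv, hw⟩
  have hcard : Fintype.card (Fin (m + 1)) = finrank ℂ E := by simp [hE]
  refine ⟨w, ?_⟩
  rwa [← coe_basisOfLinearIndependentOfCardEqFinrank hvw hcard, Ω.map_basis_ne_zero_iff]

theorem cross_ne_zero [FiniteDimensional ℂ E] (hE : finrank ℂ E = m + 1) (hΩ : Ω ≠ 0)
    (hli : LinearIndependent ℝ v) (hiso : ∀ i j, (⟪v i, v j⟫_ℂ).im = 0)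
    (hX : ∀ w, ⟪X, w⟫_ℂ = Ω (Fin.snoc v w)) : X ≠ 0 := by
  have hv : LinearIndependent ℂ v :=
    (isIsotropic_span (by simpa [forall_mem_range] using hiso)).linearIndependent_complex hli
  obtain ⟨w, hw⟩ := exists_map_snoc_ne_zero hE hΩ hv
  rintro rfl
  rw [← hX, inner_zero_left] at hw
  exact hw rfl

theorem linearIndependent_snoc_cross [FiniteDimensional ℂ E] (hE : finrank ℂ E = m + 1)
    (hΩ : Ω ≠ 0) (hli : LinearIndependent ℝ v) (hiso : ∀ i j, (⟪v i, v j⟫_ℂ).im = 0)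
    (hX : ∀ w, ⟪X, w⟫_ℂ = Ω (Fin.snoc v w)) :
    LinearIndependent ℝ (Fin.snoc v X) := by
  refine linearIndependent_finSnoc.mpr ⟨hli, fun hXv => cross_ne_zero hE hΩ hli hiso hX ?_⟩
  have hle : span ℝ (range v) ≤ (LinearMap.ker (innerₛₗ ℂ X)).restrictScalars ℝ :=
    span_le.mpr (range_subset_iff.mpr (inner_cross_eq_zero hX))
  exact inner_self_eq_zero.mp (hle hXv)

theorem finrank_span_snoc_cross [FiniteDimensional ℂ E] (hE : finrank ℂ E = m + 1)
    (hΩ : Ω ≠ 0) (hli : LinearIndependent ℝ v) (hiso : ∀ i j, (⟪v i, v j⟫_ℂ).im = 0)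
    (hX : ∀ w, ⟪X, w⟫_ℂ = Ω (Fin.snoc v w)) :
    finrank ℝ (span ℝ (range (Fin.snoc v X))) = m + 1 := by
  rw [finrank_span_eq_card (linearIndependent_snoc_cross hE hΩ hli hiso hX), Fintype.card_fin]

theorem im_map_eq_zero_of_forall_mem_span_snoc_cross [FiniteDimensional ℂ E]
    (hE : finrank ℂ E = m + 1) (hΩ : Ω ≠ 0) (hli : LinearIndependent ℝ v)
    (hiso : ∀ i j, (⟪v i, v j⟫_ℂ).im = 0) (hX : ∀ w, ⟪X, w⟫_ℂ = Ω (Fin.snoc v w))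
    {u : Fin (m + 1) → E} (hu : ∀ i, u i ∈ span ℝ (range (Fin.snoc v X))) : (Ω u).im = 0 :=
  im_map_eq_zero_of_forall_mem_span Ω (linearIndependent_snoc_cross hE hΩ hli hiso hX)
    (by rw [← hX]; exact inner_self_im (𝕜 := ℂ) X) hu

theorem cross_mem_of_isIsotropic [FiniteDimensional ℂ E] {Q : Submodule ℝ E}
    (hQ : IsIsotropic Q) (hdim : finrank ℝ E = 2 * finrank ℝ Q) (hvQ : ∀ i, v i ∈ Q)
    (hΩQ : ∀ u : Fin (m + 1) → E, (∀ i, u i ∈ Q) → (Ω u).im = 0)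
    (hX : ∀ w, ⟪X, w⟫_ℂ = Ω (Fin.snoc v w)) : X ∈ Q := by
  refine hQ.mem_of_forall_im_inner_eq_zero hdim fun q hq => ?_
  have hsnoc : ∀ i, (Fin.snoc v q : Fin (m + 1) → E) i ∈ Q :=
    Fin.lastCases (by simpa) (by simpa using hvQ)
  rw [← inner_conj_symm, Complex.conj_im, hX, hΩQ _ hsnoc, neg_zero]

theorem eq_span_snoc_cross [FiniteDimensional ℂ E] (hE : finrank ℂ E = m + 1) (hΩ : Ω ≠ 0)
    (hli : LinearIndependent ℝ v) (hiso : ∀ i j, (⟪v i, v j⟫_ℂ).im = 0)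
    (hX : ∀ w, ⟪X, w⟫_ℂ = Ω (Fin.snoc v w)) {Q : Submodule ℝ E} (hQ : finrank ℝ Q = m + 1)
    (hvQ : ∀ i, v i ∈ Q) (hQiso : IsIsotropic Q)
    (hΩQ : ∀ u : Fin (m + 1) → E, (∀ i, u i ∈ Q) → (Ω u).im = 0) :
    Q = span ℝ (range (Fin.snoc v X)) := by
  have hdim : finrank ℝ E = 2 * finrank ℝ Q := by rw [finrank_real_of_complex, hE, hQ]
  have hle : span ℝ (range (Fin.snoc v X)) ≤ Q := by
    rw [span_le, Fin.range_snoc]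
    exact insert_subset (cross_mem_of_isIsotropic hQiso hdim hvQ hΩQ hX) (range_subset_iff.mpr hvQ)
  exact (eq_of_le_of_finrank_le hle (by rw [hQ, finrank_span_snoc_cross hE hΩ hli hiso hX])).symm

end CrossProduct

theorem EuclideanSpace.basisFun_toBasis_det_apply {n : ℕ}
    (u : Fin n → EuclideanSpace ℂ (Fin n)) :
    (EuclideanSpace.basisFun (Fin n) ℂ).toBasis.det u = Matrix.det (Matrix.of fun i j => u j i) :=
  Basis.det_apply _ _

theorem statement17_general (m : ℕ)
    (v : Fin m → EuclideanSpace ℂ (Fin (m + 1)))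
    (hli : LinearIndependent ℝ v)
    (hiso : ∀ i j, (inner ℂ (v i) (v j) : ℂ).im = 0)
    (X : EuclideanSpace ℂ (Fin (m + 1)))
    (hX : ∀ w : EuclideanSpace ℂ (Fin (m + 1)),
      (inner ℂ X w : ℂ).re =
        (Matrix.det (Matrix.of fun i j =>
          (Fin.snoc v w : Fin (m + 1) → EuclideanSpace ℂ (Fin (m + 1))) j i)).re) :
    Module.finrank ℝ (Submodule.span ℝ (Set.range (Fin.snoc v X))) = m + 1 ∧
    (∀ p ∈ Submodule.span ℝ (Set.range (Fin.snoc v X)),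
      ∀ q ∈ Submodule.span ℝ (Set.range (Fin.snoc v X)),
        (inner ℂ p q : ℂ).im = 0) ∧
    (∀ u : Fin (m + 1) → EuclideanSpace ℂ (Fin (m + 1)),
      (∀ i, u i ∈ Submodule.span ℝ (Set.range (Fin.snoc v X))) →
      (Matrix.det (Matrix.of fun i j => u j i)).im = 0) ∧
    (∀ Q : Submodule ℝ (EuclideanSpace ℂ (Fin (m + 1))),
      Module.finrank ℝ Q = m + 1 →
      (∀ i, v i ∈ Q) →
      (∀ p ∈ Q, ∀ q ∈ Q, (inner ℂ p q : ℂ).im = 0) →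
      (∀ u : Fin (m + 1) → EuclideanSpace ℂ (Fin (m + 1)),
        (∀ i, u i ∈ Q) → (Matrix.det (Matrix.of fun i j => u j i)).im = 0) →
      Q = Submodule.span ℝ (Set.range (Fin.snoc v X))) := by
  simp only [← EuclideanSpace.basisFun_toBasis_det_apply] at hX ⊢
  have hX' := inner_eq_map_snoc_of_re_eq hX
  have hE : finrank ℂ (EuclideanSpace ℂ (Fin (m + 1))) = m + 1 := finrank_euclideanSpace_fin
  have hΩ := (EuclideanSpace.basisFun (Fin (m + 1)) ℂ).toBasis.det_ne_zero
  exact ⟨finrank_span_snoc_cross hE hΩ hli hiso hX', isIsotropic_span_snoc_cross hiso hX',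
    fun u hu => im_map_eq_zero_of_forall_mem_span_snoc_cross hE hΩ hli hiso hX' hu,
    fun Q hQ hvQ hQiso hΩQ => eq_span_snoc_cross hE hΩ hli hiso hX' hQ hvQ hQiso hΩQ⟩

/-- (Extension of an isotropic `(n-1)`-plane to a unique
special Lagrangian `n`-plane, `n = m + 1 ≥ 2`.) Let `v₁, …, v_{n-1} ∈ ℂⁿ` be
`ℝ`-linearly independent and pairwise isotropic for `ω(z, w) = Im ⟨z, w⟩`, and
let `X` be the calibrated cross product, i.e. the unique vector with
`Re ⟨X, w⟩ = Re (Ω (v₁, …, v_{n-1}, w))` for all `w`.  Then the real span `Q`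
of `v₁, …, v_{n-1}, X` is an `n`-dimensional real subspace on which `ω`
vanishes and `Im Ω` vanishes on every `n`-tuple from `Q`; moreover `Q` is the
unique such `n`-dimensional real subspace containing `v₁, …, v_{n-1}`. -/
theorem statement17 (m : ℕ) (hm : 1 ≤ m)
    (v : Fin m → EuclideanSpace ℂ (Fin (m + 1)))
    (hli : LinearIndependent ℝ v)
    (hiso : ∀ i j, (inner ℂ (v i) (v j) : ℂ).im = 0)
    (X : EuclideanSpace ℂ (Fin (m + 1)))
    (hX : ∀ w : EuclideanSpace ℂ (Fin (m + 1)),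
      (inner ℂ X w : ℂ).re =
        (Matrix.det (Matrix.of fun i j =>
          (Fin.snoc v w : Fin (m + 1) → EuclideanSpace ℂ (Fin (m + 1))) j i)).re) :
    Module.finrank ℝ (Submodule.span ℝ (Set.range (Fin.snoc v X))) = m + 1 ∧
    (∀ p ∈ Submodule.span ℝ (Set.range (Fin.snoc v X)),
      ∀ q ∈ Submodule.span ℝ (Set.range (Fin.snoc v X)),
        (inner ℂ p q : ℂ).im = 0) ∧
    (∀ u : Fin (m + 1) → EuclideanSpace ℂ (Fin (m + 1)),
      (∀ i, u i ∈ Submodule.span ℝ (Set.range (Fin.snoc v X))) →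
      (Matrix.det (Matrix.of fun i j => u j i)).im = 0) ∧
    (∀ Q : Submodule ℝ (EuclideanSpace ℂ (Fin (m + 1))),
      Module.finrank ℝ Q = m + 1 →
      (∀ i, v i ∈ Q) →
      (∀ p ∈ Q, ∀ q ∈ Q, (inner ℂ p q : ℂ).im = 0) →
      (∀ u : Fin (m + 1) → EuclideanSpace ℂ (Fin (m + 1)),
        (∀ i, u i ∈ Q) → (Matrix.det (Matrix.of fun i j => u j i)).im = 0) →
      Q = Submodule.span ℝ (Set.range (Fin.snoc v X))) :=
  statement17_general m v hli hiso X hX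
end
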